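/- Let a, b, c : A be three pairwise distinct atoms. Then for all terms t1, t2, t3 : T, g (h (g (h (g (h a b) t1) b) t2) b) t3 ≈ g (h a b) c holds if and only if exactly one of t1, t2, t3 is ≈-equivalent to c and the other two are ≈-equivalent to b, i.e., if and only if (t1 ≈ c ∧ t2 ≈ b ∧ t3 ≈ b) ∨ (t1 ≈ b ∧ t2 ≈ c ∧ t3 ≈ b) ∨ (t1 ≈ b ∧ t2 ≈ b ∧ t3 ≈ c). (This is the gadget used to reduce Monotone 1-in-3 SAT to unifiability modulo g(h(x,y), y) = x.) -/
import Mathlib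


/-- Element-terms generated by atoms `A` and binary constructors `h`, `g`. -/
inductive T (A : Type*) : Type _
  | atom : A → T A
  | h : T A → T A → T A
  | g : T A → T A → T A

/-- The smallest congruence on `T A` containing `g (h x y) y ≈ x`,
i.e. equality modulo the collapsing rewrite rule `g(h(x,y), y) → x`. -/
inductive Eqv {A : Type*} : T A → T A → Prop
  | collapse (x y : T A) : Eqv (T.g (T.h x y) y) x
  | refl (x : T A) : Eqv x x
  | symm {x y : T A} : Eqv x y → Eqv y x
  | trans {x y z : T A} : Eqv x y → Eqv y z → Eqv x z
  | hcong {x₁ x₂ y₁ y₂ : T A} : Eqv x₁ x₂ → Eqv y₁ y₂ → Eqv (T.h x₁ y₁) (T.h x₂ y₂)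
  | gcong {x₁ x₂ y₁ y₂ : T A} : Eqv x₁ x₂ → Eqv y₁ y₂ → Eqv (T.g x₁ y₁) (T.g x₂ y₂)

open Classical in
noncomputable def gred {A : Type*} (p q : T A) : T A :=
  match p with
  | T.h u v => if v = q then u else T.g (T.h u v) q
  | _ => T.g p q

open Classical in
lemma gred_h {A : Type*} (u v q : T A) :
    gred (T.h u v) q = if v = q then u else T.g (T.h u v) q := rfl

lemma gred_atom {A : Type*} (x : A) (q : T A) : gred (T.atom x) q = T.g (T.atom x) q := rfl
lemma gred_g {A : Type*} (u v q : T A) : gred (T.g u v) q = T.g (T.g u v) q := rfl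

noncomputable def nf {A : Type*} : T A → T A
  | T.atom x => T.atom x
  | T.h x y => T.h (nf x) (nf y)
  | T.g x y => gred (nf x) (nf y)

lemma nf_eq_of_eqv {A : Type*} {x y : T A} (h : Eqv x y) : nf x = nf y := by
  induction h with
  | collapse x y => simp [nf, gred_h]
  | refl x => rfl
  | symm _ ih => exact ih.symm
  | trans _ _ ih1 ih2 => exact ih1.trans ih2
  | hcong _ _ ih1 ih2 => simp [nf, ih1, ih2]
  | gcong _ _ ih1 ih2 => simp [nf, ih1, ih2]

lemma eqv_gred {A : Type*} (p q : T A) : Eqv (T.g p q) (gred p q) := by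
  cases p with
  | atom x => exact Eqv.refl _
  | g u v => exact Eqv.refl _
  | h u v =>
    rw [gred_h]
    split
    · next hvq => subst hvq; exact Eqv.collapse u v
    · exact Eqv.refl _

lemma eqv_nf {A : Type*} (x : T A) : Eqv x (nf x) := by
  induction x with
  | atom x => exact Eqv.refl _
  | h x y ih1 ih2 => exact Eqv.hcong ih1 ih2
  | g x y ih1 ih2 => exact Eqv.trans (Eqv.gcong ih1 ih2) (eqv_gred _ _)

lemma eqv_iff_nf {A : Type*} (x y : T A) : Eqv x y ↔ nf x = nf y := by
  constructor
  · exact nf_eq_of_eqv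
  · intro h
    exact Eqv.trans (eqv_nf x) (h ▸ Eqv.symm (eqv_nf y))

lemma gadget_nf {A : Type*} (a b c : A) (hbc : b ≠ c) (s1 s2 s3 : T A) :
    gred (T.h (gred (T.h (gred (T.h (T.atom a) (T.atom b)) s1) (T.atom b)) s2)
        (T.atom b)) s3 = T.g (T.h (T.atom a) (T.atom b)) (T.atom c) ↔
      ((s1 = T.atom c ∧ s2 = T.atom b ∧ s3 = T.atom b) ∨
       (s1 = T.atom b ∧ s2 = T.atom c ∧ s3 = T.atom b) ∨
       (s1 = T.atom b ∧ s2 = T.atom b ∧ s3 = T.atom c)) := by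
  rw [gred_h]
  split <;> [subst_vars; skip] <;> rw [gred_h] <;>
    (split <;> [subst_vars; skip]) <;> rw [gred_h] <;>
    (split <;> [subst_vars; skip]) <;> simp_all [eq_comm]

/-- The Monotone 1-in-3 SAT gadget: with pairwise distinct atoms `a`, `b`, `c`,
`g(h(g(h(g(h(a,b),t1),b),t2),b),t3) ≈ g(h(a,b),c)` iff exactly one of
`t1, t2, t3` is `≈ c` and the other two are `≈ b`. -/
theorem one_in_three_gadget {A : Type*} (a b c : A)
    (hab : a ≠ b) (hac : a ≠ c) (hbc : b ≠ c) :
    ∀ t1 t2 t3 : T A,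
      Eqv (T.g (T.h (T.g (T.h (T.g (T.h (T.atom a) (T.atom b)) t1) (T.atom b)) t2)
            (T.atom b)) t3)
          (T.g (T.h (T.atom a) (T.atom b)) (T.atom c)) ↔
        ((Eqv t1 (T.atom c) ∧ Eqv t2 (T.atom b) ∧ Eqv t3 (T.atom b)) ∨
         (Eqv t1 (T.atom b) ∧ Eqv t2 (T.atom c) ∧ Eqv t3 (T.atom b)) ∨
         (Eqv t1 (T.atom b) ∧ Eqv t2 (T.atom b) ∧ Eqv t3 (T.atom c))) := by
  intro t1 t2 t3
  have hrhs : gred (T.h (T.atom a) (T.atom b)) (T.atom c)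
      = T.g (T.h (T.atom a) (T.atom b)) (T.atom c) := by
    rw [gred_h, if_neg]; simp [hbc]
  simp only [eqv_iff_nf, nf, hrhs]
  exact gadget_nf a b c hbc (nf t1) (nf t2) (nf t3)
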